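/- Let k ≥ 2, let S_1, …, S_k be strings over an alphabet Σ, let a, b ≥ 0 be integers, let @ be a symbol not in Σ, and let #_1, …, #_k be pairwise distinct symbols, none belonging to Σ and all different from @. Define S'_i = @^a · S_i · #_i^b (the string S_i preceded by a copies of @ and followed by b copies of #_i). Then LCS(S'_1, …, S'_k) = a + LCS(S_1, …, S_k). -/

import Mathlib

/-!
Every common subsequence of the padded strings avoids the trailing `#`-blocks: a symbol `#ᵢ`
occurs in no `S'ⱼ` with `j ≠ i`, and `k ≥ 2` provides such a `j`. Hence the suffixes can be
dropped, and a common subsequence of the `@^a · Sᵢ` is some `@^n` (`n ≤ a`) followed by a common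
subsequence of the `Sᵢ`; conversely `@^a` may be put in front of any common subsequence of the
`Sᵢ`.
-/

/-- The length of a longest common subsequence of a family of strings. -/
noncomputable def lcsLen {α : Type*} (L : List (List α)) : ℕ :=
  sSup { m : ℕ | ∃ T : List α, T.length = m ∧ ∀ s ∈ L, T.Sublist s }

namespace List

variable {α : Type*}

theorem Sublist.of_sublist_append_of_forall_not_mem {T l q : List α} (h : T <+ l ++ q)
    (hT : ∀ x ∈ T, x ∉ q) : T <+ l := by
  obtain ⟨T₁, T₂, rfl, h₁, h₂⟩ := sublist_append_iff.1 h
  have : T₂ = [] := eq_nil_iff_forall_not_mem.2 fun x hx ↦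
    hT x (mem_append_right _ hx) (h₂.subset hx)
  simpa [this] using h₁

theorem Sublist.exists_eq_replicate_append {T s : List α} {c : α} {a : ℕ}
    (h : T <+ replicate a c ++ s) : ∃ n ≤ a, ∃ U, U <+ s ∧ T = replicate n c ++ U := by
  obtain ⟨T₁, U, rfl, h₁, hU⟩ := sublist_append_iff.1 h
  obtain ⟨n, hn, rfl⟩ := sublist_replicate_iff.1 h₁
  exact ⟨n, hn, U, hU, rfl⟩

theorem filter_ne_replicate_append [DecidableEq α] {U : List α} {c : α} (hc : c ∉ U) (n : ℕ) :
    (replicate n c ++ U).filter (· ≠ c) = U := by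
  rw [filter_append,
    (filter_eq_self (l := U)).2 fun x hx ↦ by simpa using ne_of_mem_of_not_mem hx hc]
  simp

end List

open List

section LcsLen

variable {α : Type*} {L L' : List (List α)}

theorem lcsLen_congr (h : ∀ T : List α, (∀ s ∈ L, T <+ s) ↔ ∀ s ∈ L', T <+ s) :
    lcsLen L = lcsLen L' := by
  simp only [lcsLen, h]

theorem bddAbove_lcsLen_set (hL : L ≠ []) :
    BddAbove {m | ∃ T : List α, T.length = m ∧ ∀ s ∈ L, T <+ s} := by
  obtain ⟨s, hs⟩ := exists_mem_of_ne_nil L hL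
  exact ⟨s.length, by rintro _ ⟨T, rfl, hT⟩; exact (hT s hs).length_le⟩

theorem length_le_lcsLen (hL : L ≠ []) {T : List α} (hT : ∀ s ∈ L, T <+ s) :
    T.length ≤ lcsLen L :=
  le_csSup (bddAbove_lcsLen_set hL) ⟨T, rfl, hT⟩

theorem exists_length_eq_lcsLen (hL : L ≠ []) :
    ∃ T : List α, T.length = lcsLen L ∧ ∀ s ∈ L, T <+ s :=
  Nat.sSup_mem (s := {m | ∃ T : List α, T.length = m ∧ ∀ s ∈ L, T <+ s})
    ⟨0, [], rfl, fun s _ ↦ nil_sublist s⟩ (bddAbove_lcsLen_set hL)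

theorem lcsLen_le {n : ℕ} (h : ∀ T : List α, (∀ s ∈ L, T <+ s) → T.length ≤ n) :
    lcsLen L ≤ n :=
  csSup_le ⟨0, [], rfl, fun s _ ↦ nil_sublist s⟩ (by rintro _ ⟨T, rfl, hT⟩; exact h T hT)

theorem lcsLen_map_replicate_append (hL : L ≠ []) {c : α} (hc : ∀ s ∈ L, c ∉ s) (a : ℕ) :
    lcsLen (L.map (replicate a c ++ ·)) = a + lcsLen L := by
  classical
  apply le_antisymm
  · refine lcsLen_le fun T hT ↦ ?_
    rw [forall_mem_map] at hT
    have hdecomp : ∀ s ∈ L,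
        ∃ n ≤ a, T = replicate n c ++ T.filter (· ≠ c) ∧ T.filter (· ≠ c) <+ s := by
      intro s hs
      obtain ⟨n, hn, U, hU, rfl⟩ := (hT s hs).exists_eq_replicate_append
      rw [filter_ne_replicate_append (fun h ↦ hc s hs (hU.subset h))]
      exact ⟨n, hn, rfl, hU⟩
    obtain ⟨s, hs⟩ := exists_mem_of_ne_nil L hL
    obtain ⟨n, hn, hT_eq, -⟩ := hdecomp s hs
    have hcommon : (T.filter (· ≠ c)).length ≤ lcsLen L :=
      length_le_lcsLen hL fun s hs ↦ by obtain ⟨-, -, -, h⟩ := hdecomp s hs; exact h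
    rw [hT_eq, length_append, length_replicate]
    omega
  · obtain ⟨T, hlen, hT⟩ := exists_length_eq_lcsLen hL
    have hmap : L.map (replicate a c ++ ·) ≠ [] := by simpa using hL
    have := length_le_lcsLen hmap (T := replicate a c ++ T) <| forall_mem_map.2 fun s hs ↦
      (hT s hs).append_left _
    simpa [hlen] using this

theorem lcsLen_ofFn_append_replicate {k : ℕ} (hk : 2 ≤ k) {s : Fin k → List α} {d : Fin k → α}
    (hd : Function.Injective d) (hfresh : ∀ i j, d i ∉ s j) (b : ℕ) :
    lcsLen (ofFn fun i ↦ s i ++ replicate b (d i)) = lcsLen (ofFn s) := by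
  have : Nontrivial (Fin k) := Fin.nontrivial_iff_two_le.2 hk
  refine lcsLen_congr fun T ↦ ?_
  simp only [forall_mem_ofFn_iff]
  refine ⟨fun hT i ↦ (hT i).of_sublist_append_of_forall_not_mem ?_,
    fun hT i ↦ (hT i).trans (sublist_append_left _ _)⟩
  rintro x hx hxi
  obtain ⟨j, hji⟩ := exists_ne i
  rw [eq_of_mem_replicate hxi] at hx
  rcases mem_append.1 ((hT j).subset hx) with h | h
  · exact hfresh i j h
  · exact hji (hd (eq_of_mem_replicate h)).symm

end LcsLen

/-- Let `k ≥ 2`, let `S₁, …, S_k` be strings over an alphabet `Σ`,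
let `a, b ≥ 0`, let `@` be a symbol not in `Σ`, and let `#₁, …, #_k` be pairwise distinct
symbols not in `Σ` and all different from `@`.  With `S'ᵢ = @^a · Sᵢ · #ᵢ^b`, we have
`LCS(S'₁, …, S'_k) = a + LCS(S₁, …, S_k)`. -/
theorem lcs_padded_with_fresh_symbols
    {β : Type*} (k : ℕ) (hk : 2 ≤ k)
    (Sig : Set β) (S : Fin k → List β) (hS : ∀ i, ∀ c ∈ S i, c ∈ Sig)
    (a b : ℕ) (atSym : β) (hash : Fin k → β)
    (hat : atSym ∉ Sig) (hhash : ∀ i, hash i ∉ Sig)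
    (hinj : Function.Injective hash) (hne : ∀ i, hash i ≠ atSym) :
    lcsLen (List.ofFn fun i =>
        List.replicate a atSym ++ S i ++ List.replicate b (hash i)) =
      a + lcsLen (List.ofFn S) := by
  have hfresh : ∀ i j, hash i ∉ replicate a atSym ++ S j := fun i j h ↦ by
    rcases mem_append.1 h with h | h
    · exact hne i (eq_of_mem_replicate h)
    · exact hhash i (hS j _ h)
  have hprefix : ofFn (fun i ↦ replicate a atSym ++ S i) =
      (ofFn S).map (replicate a atSym ++ ·) :=
    map_ofFn.symm
  have hat_free : ∀ s ∈ ofFn S, atSym ∉ s :=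
    forall_mem_ofFn_iff.2 fun i h ↦ hat (hS i _ h)
  rw [lcsLen_ofFn_append_replicate hk hinj hfresh, hprefix,
    lcsLen_map_replicate_append (mt ofFn_eq_nil_iff.1 (by omega)) hat_free]
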